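/- arXiv:2505.23194 — 4 statements merged into one kernel-verified Lean document; each statement's English description precedes it below -/
import Mathlib

section
/- Let $a, b, x, y \in \mathbb{R}$ (representing $\gamma[A_0], \gamma[B_0], \gamma[\eta_A], \gamma[\eta_B]$ respectively). If the system $\max(b, y) + x + 1 = 0$, $\max(a, x) + y + 1 = 0$, and $\max(a, x) + \max(b, y) + 1 = 0$ holds, then $x + y = -1$, $a \le x$, and $b \le y$. -/
/-- Reduction of LoRA stability/efficiency conditions (Adam) to the solution set. -/
theorem lora_adam_solution_set
    (a b x y : ℝ)
    (h1 : max b y + x + 1 = 0)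
    (h2 : max a x + y + 1 = 0)
    (h3 : max a x + max b y + 1 = 0) :
    x + y = -1 ∧ a ≤ x ∧ b ≤ y := by
  have hx : max a x = x := by linarith
  have hy : max b y = y := by linarith
  exact ⟨by linarith, max_eq_right_iff.mp hx, max_eq_right_iff.mp hy⟩
end

section
/- Let $a, b, x, y \in \mathbb{R}$ satisfy $\max(b, y) + x + 1 = 0$, $\max(a, x) + y + 1 = 0$, $\max(a, x) + \max(b, y) + 1 = 0$, together with the uniform learning rate constraint $x = y$. Then $x = y = -1/2$, $a \le -1/2$, and $b \le -1/2$. -/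
/-- Under a uniform learning rate, stable and efficient LoRA fine-tuning with Adam
forces `γ[η] = -1/2` and initialization exponents at most `-1/2`. -/
theorem lora_adam_uniform_lr_solution
    (a b x y : ℝ)
    (h1 : max b y + x + 1 = 0)
    (h2 : max a x + y + 1 = 0)
    (h3 : max a x + max b y + 1 = 0)
    (hxy : x = y) :
    x = -1/2 ∧ y = -1/2 ∧ a ≤ -1/2 ∧ b ≤ -1/2 := by
  -- Comparing `h3` with `h1` and `h2` shows that each maximum is attained at the learning-rate exponent.
  have ha : a ≤ x := max_eq_right_iff.mp (by linarith)
  have hb : b ≤ y := max_eq_right_iff.mp (by linarith)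
  rw [max_eq_right ha, max_eq_right hb] at h3
  refine ⟨?_, ?_, ?_, ?_⟩ <;> linarith
end

section
/- With zero initialization of $A$ (i.e., $\gamma[A_0] = -\infty$) and $\gamma[B_0] = 0$, there is no choice of a uniform learning rate exponent $x = \gamma[\eta_A] = \gamma[\eta_B]$ satisfying all three conditions $\max(\gamma[B_0], x) + x + 1 = 0$, $\max(\gamma[A_0], x) + x + 1 = 0$, and $\max(\gamma[A_0], x) + \max(\gamma[B_0], x) + 1 = 0$ simultaneously. -/
@[simp, norm_cast]
theorem EReal.coe_max (x y : ℝ) : ((max x y : ℝ) : EReal) = max (x : EReal) (y : EReal) :=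
  EReal.coe_strictMono.monotone.map_max

/-- Init[B] (`γ[A₀] = -∞`, `γ[B₀] = 0`) admits no uniform learning-rate exponent
achieving both stability and efficiency. -/
theorem init_B_not_stable_efficient :
    ¬ ∃ x : ℝ,
      max (0 : EReal) (x : EReal) + (x : EReal) + 1 = 0 ∧
      max (⊥ : EReal) (x : EReal) + (x : EReal) + 1 = 0 ∧
      max (⊥ : EReal) (x : EReal) + max (0 : EReal) (x : EReal) + 1 = 0 := by
  rintro ⟨x, h_B, h_A, -⟩
  rw [max_bot_left] at h_A
  have h_B_real : max 0 x + x + 1 = 0 := by exact_mod_cast h_B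
  have h_A_real : x + x + 1 = 0 := by exact_mod_cast h_A
  -- `h_A_real` pins `x = -1/2`, and then the left side of `h_B_real` is at least `1/2`.
  linarith [le_max_left 0 x]
end

section
/- Consider the internal-stability-augmented system: $\max(b, y) + x + 1 = 0$, $\max(a, x) + y + 1 = 0$, $\max(a, x) + \max(b, y) + 1 = 0$, and $\max(a, x) + 1 = 0$, for $a, b \in \mathbb{R} \cup \{-\infty\}$, $x, y \in \mathbb{R}$. Then the solution set is exactly $\{x = -1, y = 0, a \le -1, b \le 0\}$ (with $a, b$ not both $-\infty$ being the nondegeneracy side-condition). -/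
/-! Each of `max a x` and `max b y` is pinned to a real number by an equation in which it is
shifted by reals (`⊥` and `⊤` absorb real summands, so cannot equal `0`); the system then becomes
linear over `ℝ`, and `a`, `b` are bounded by the values of the maxima they sit in. -/

theorem EReal.exists_coe_of_add_coe_eq_coe {z : EReal} {r s : ℝ} (h : z + r = s) :
    ∃ t : ℝ, z = t ∧ t + r = s := by
  cases z with
  | bot => simp at h
  | top => simp at h
  | coe t => exact ⟨t, rfl, by exact_mod_cast h⟩

/-- The internal-stability-augmented system is solved exactly by
`x = -1, y = 0, a ≤ -1, b ≤ 0` (the LoRA+ prescription). -/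
theorem lora_plus_internal_stability (a b : EReal) (x y : ℝ) :
    (max b (y : EReal) + (x : EReal) + 1 = 0 ∧
     max a (x : EReal) + (y : EReal) + 1 = 0 ∧
     max a (x : EReal) + max b (y : EReal) + 1 = 0 ∧
     max a (x : EReal) + 1 = 0)
    ↔ (x = -1 ∧ y = 0 ∧ a ≤ ((-1 : ℝ) : EReal) ∧ b ≤ (0 : EReal)) := by
  constructor
  · rintro ⟨h1, h2, h3, h4⟩
    rw [← EReal.coe_one, ← EReal.coe_zero] at h1 h2 h3 h4
    obtain ⟨p, hp, hp1⟩ := EReal.exists_coe_of_add_coe_eq_coe h4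
    obtain ⟨u, hu, hu1⟩ := EReal.exists_coe_of_add_coe_eq_coe h1
    obtain ⟨m, hm, hm1⟩ := EReal.exists_coe_of_add_coe_eq_coe hu
    rw [hp] at h2 h3
    rw [hm] at h3
    norm_cast at h2 h3
    have hp_eq : p = -1 := by linarith
    have hm_eq : m = 0 := by linarith
    refine ⟨by linarith, by linarith, ?_, ?_⟩
    · simpa [hp, hp_eq] using le_max_left a (x : EReal)
    · simpa [hm, hm_eq] using le_max_left b (y : EReal)
  · rintro ⟨rfl, rfl, ha, hb⟩
    rw [max_eq_right ha, max_eq_right (by exact_mod_cast hb)]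
    norm_cast
end
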